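/- arXiv:1208.6351 — 3 statements merged into one kernel-verified Lean document; each statement's English description precedes it below -/
import Mathlib

section
/- Let K be a real symmetric m×m matrix, d ∈ ℝ^m, and suppose 1 is an eigenvalue of K with orthonormal eigenvectors φ₁,…,φ_r spanning ker(K − E). Suppose â ∈ ℝ^m satisfies (K − E) â = d − ∑_{i=1}^r ⟨d, φ_i⟩ φ_i. Then for any constants c₁,…,c_r, the function x(t) = −(ln t / ln 2) ∑_{i=1}^r ⟨d, φ_i⟩ φ_i + ∑_{i=1}^r c_i φ_i + â satisfies, for all t > 0, ∫₀^{t/2} K x(s) ds + ∫_{t/2}^{t} (K − 2E) x(s) ds = d t. -/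
/-!
Write `p = ∑ ⟨d, φᵢ⟩ φᵢ` and `u = ∑ cᵢ φᵢ + â`. Since `K` fixes every `φᵢ`, it fixes `p` and
`K u = u + (d - p)`; hence the integrand of the first integral is `-(ln s / ln 2) p + u + (d - p)`
and that of the second is `(ln s / ln 2) p + (d - p) - u`. The constant parts contribute
`t (d - p)` and the logarithmic parts contribute `t p`, because
`∫_{t/2}^t ln s ds - ∫_0^{t/2} ln s ds = t ln 2`.
-/

open Matrix Real intervalIntegral

theorem intervalIntegral.integral_log_smul_add {E : Type*} [NormedAddCommGroup E] [NormedSpace ℝ E]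
    [CompleteSpace E] (a b : ℝ) (v w : E) :
    ∫ s in a..b, log s • v + w = (∫ s in a..b, log s) • v + (b - a) • w := by
  have hlog : IntervalIntegrable log MeasureTheory.volume a b := intervalIntegrable_log'
  rw [integral_add ⟨hlog.1.smul_const v, hlog.2.smul_const v⟩ intervalIntegrable_const,
    integral_smul_const, integral_const]

theorem integral_log_half_sub_integral_log_zero_half (t : ℝ) :
    (∫ s in (t / 2)..t, log s) - ∫ s in (0 : ℝ)..(t / 2), log s = t * log 2 := by
  rcases eq_or_ne t 0 with rfl | ht
  · simp
  rw [integral_log, integral_log, log_div ht two_ne_zero]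
  simp only [log_zero, mul_zero, sub_zero, add_zero]
  ring

theorem Matrix.mulVec_sum_smul_of_forall_mulVec_eq {R n ι : Type*} [CommSemiring R] [Fintype n]
    [Fintype ι] (K : Matrix n n R) (φ : ι → n → R) (heig : ∀ i, K *ᵥ φ i = φ i) (a : ι → R) :
    K *ᵥ ∑ i, a i • φ i = ∑ i, a i • φ i := by
  simp only [mulVec_sum, mulVec_smul, heig]

theorem integral_mulVec_add_integral_sub_two_mulVec_log_family {n : Type*} [Fintype n]
    [DecidableEq n] (K : Matrix n n ℝ) (d p u : n → ℝ) (hp : K *ᵥ p = p)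
    (hu : (K - 1) *ᵥ u = d - p) (t : ℝ) :
    (∫ s in (0 : ℝ)..(t / 2), K *ᵥ ((-(log s / log 2)) • p + u)) +
        (∫ s in (t / 2)..t, (K - 2 • (1 : Matrix n n ℝ)) *ᵥ ((-(log s / log 2)) • p + u)) =
      t • d := by
  have hKu : K *ᵥ u = u + (d - p) := by
    rw [← hu, sub_mulVec, one_mulVec]
    abel
  have hfirst : ∀ s, K *ᵥ ((-(log s / log 2)) • p + u) =
      log s • (-(log 2)⁻¹ • p) + (u + (d - p)) := by
    intro s
    rw [mulVec_add, mulVec_smul, hp, hKu]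
    match_scalars <;> ring
  have hsecond : ∀ s, (K - 2 • (1 : Matrix n n ℝ)) *ᵥ ((-(log s / log 2)) • p + u) =
      log s • ((log 2)⁻¹ • p) + (d - p - u) := by
    intro s
    rw [sub_mulVec, smul_mulVec, one_mulVec, hfirst]
    match_scalars <;> ring
  simp only [hfirst, hsecond, integral_log_smul_add]
  rw [eq_add_of_sub_eq (integral_log_half_sub_integral_log_zero_half t)]
  have hlog2 : log 2 ≠ 0 := (log_pos one_lt_two).ne'
  match_scalars <;> field_simp <;> ring

theorem example_parametric_family_of_solutions_general (m r : ℕ)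
    (K : Matrix (Fin m) (Fin m) ℝ)
    (d : Fin m → ℝ) (φ : Fin r → (Fin m → ℝ))
    (heig : ∀ i : Fin r, K.mulVec (φ i) = φ i)
    (aHat : Fin m → ℝ)
    (haHat : (K - 1).mulVec aHat = d - ∑ i : Fin r, (d ⬝ᵥ φ i) • φ i)
    (c : Fin r → ℝ)
    (x : ℝ → Fin m → ℝ)
    (hx : ∀ t : ℝ, x t =
      (-(Real.log t / Real.log 2)) • (∑ i : Fin r, (d ⬝ᵥ φ i) • φ i) +
        (∑ i : Fin r, c i • φ i) + aHat) :
    ∀ t : ℝ, 0 < t →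
      (∫ s in (0 : ℝ)..(t / 2), K.mulVec (x s)) +
        (∫ s in (t / 2)..t, (K - 2 • (1 : Matrix (Fin m) (Fin m) ℝ)).mulVec (x s)) =
        t • d := by
  intro t _
  have hfix := K.mulVec_sum_smul_of_forall_mulVec_eq φ heig
  have hu : (K - 1) *ᵥ (∑ i, c i • φ i + aHat) = d - ∑ i, (d ⬝ᵥ φ i) • φ i := by
    rw [mulVec_add, sub_mulVec, one_mulVec, hfix, sub_self, zero_add, haHat]
  rw [funext fun s => (hx s).trans (add_assoc _ _ _)]
  exact integral_mulVec_add_integral_sub_two_mulVec_log_family K d _ _ (hfix _) hu t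

/-- closed-form parametric family of solutions in the example. -/
theorem example_parametric_family_of_solutions (m r : ℕ)
    (K : Matrix (Fin m) (Fin m) ℝ) (hK : K.IsSymm)
    (d : Fin m → ℝ) (φ : Fin r → (Fin m → ℝ))
    (horth : ∀ i j : Fin r, φ i ⬝ᵥ φ j = if i = j then 1 else 0)
    (heig : ∀ i : Fin r, K.mulVec (φ i) = φ i)
    (aHat : Fin m → ℝ)
    (haHat : (K - 1).mulVec aHat = d - ∑ i : Fin r, (d ⬝ᵥ φ i) • φ i)
    (c : Fin r → ℝ)
    (x : ℝ → Fin m → ℝ)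
    (hx : ∀ t : ℝ, x t =
      (-(Real.log t / Real.log 2)) • (∑ i : Fin r, (d ⬝ᵥ φ i) • φ i) +
        (∑ i : Fin r, c i • φ i) + aHat) :
    ∀ t : ℝ, 0 < t →
      (∫ s in (0 : ℝ)..(t / 2), K.mulVec (x s)) +
        (∫ s in (t / 2)..t, (K - 2 • (1 : Matrix (Fin m) (Fin m) ℝ)).mulVec (x s)) =
        t • d :=
  example_parametric_family_of_solutions_general m r K d φ heig aHat haHat c x hx
end

section
/- Let K₁, K₂ : [0,T]×[0,T] → Matrix m m ℝ be continuously differentiable in t, α ∈ (0,1), f : [0,T] → ℝ^m continuously differentiable with f(0) = 0, and let x : (0,T] → ℝ^m be continuous and integrable near 0. Then x satisfies ∫₀^{α t} K₁(t,s) x(s) ds + ∫_{α t}^{t} K₂(t,s) x(s) ds = f(t) for all t ∈ (0,T] if and only if x satisfies the differentiated equation K₂(t,t) x(t) + α (K₁(t, α t) − K₂(t, α t)) x(α t) + ∫₀^{α t} ∂_t K₁(t,s) x(s) ds + ∫_{α t}^{t} ∂_t K₂(t,s) x(s) ds = f'(t) for all t ∈ (0,T]. -/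
/-!
Differentiating under the integral sign, together with the Leibniz rule at the moving endpoints
`α t` and `t`, turns the first-kind equation into the differentiated one. Conversely, if the
derivatives of both sides agree on `(0, T]`, their difference is constant there; it tends to `0`
at `0⁺` because `f 0 = 0` while the kernels are bounded and `x` is integrable near `0`, so the
difference vanishes.
-/

open Set intervalIntegral MeasureTheory Filter Topology Asymptotics

section

variable {E : Type*} [NormedAddCommGroup E]

theorem MeasureTheory.IntegrableOn.intervalIntegrable_of_mem_Icc {x : ℝ → E} {a b u v : ℝ}
    (hx : IntegrableOn x (Ioc a b)) (hu : u ∈ Icc a b) (hv : v ∈ Icc a b) :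
    IntervalIntegrable x volume u v :=
  intervalIntegrable_iff.2 (hx.mono_set (Ioc_subset_Ioc (le_min hu.1 hv.1) (max_le hu.2 hv.2)))

variable [NormedSpace ℝ E] {F : Type*} [NormedAddCommGroup F] [NormedSpace ℝ F]

theorem IntervalIntegrable.continuous_clm_apply {L : ℝ → E →L[ℝ] F} {x : ℝ → E} {a b : ℝ}
    (hL : Continuous L) (hx : IntervalIntegrable x volume a b) :
    IntervalIntegrable (fun s => L s (x s)) volume a b := by
  rw [intervalIntegrable_iff] at hx ⊢
  obtain ⟨C, hC⟩ :=
    (isCompact_uIcc (a := a) (b := b)).exists_bound_of_continuousOn hL.continuousOn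
  refine (hx.norm.const_mul C).mono'
    ((continuous_fst.clm_apply continuous_snd).comp_aestronglyMeasurable
      (hL.aestronglyMeasurable.prodMk hx.aestronglyMeasurable)) ?_
  filter_upwards [ae_restrict_mem measurableSet_uIoc] with s hs
  exact (L s).le_of_opNorm_le (hC s (uIoc_subset_uIcc hs)) _

theorem MeasureTheory.IntegrableOn.intervalIntegrable_clm_apply {K : ℝ → ℝ → E →L[ℝ] F}
    {x : ℝ → E} {a b u v : ℝ} (hKc : Continuous fun p : ℝ × ℝ => K p.1 p.2)
    (hx : IntegrableOn x (Ioc a b)) (t : ℝ) (hu : u ∈ Icc a b) (hv : v ∈ Icc a b) :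
    IntervalIntegrable (fun s => K t s (x s)) volume u v :=
  (hx.intervalIntegrable_of_mem_Icc hu hv).continuous_clm_apply
    (hKc.comp (continuous_const.prodMk continuous_id))

theorem norm_intervalIntegral_clm_apply_le {L : ℝ → E →L[ℝ] F} {x : ℝ → E} {a b C : ℝ}
    (hab : a ≤ b) (hL : ∀ s ∈ Ioc a b, ‖L s‖ ≤ C) (hx : IntervalIntegrable x volume a b) :
    ‖∫ s in a..b, L s (x s)‖ ≤ C * ∫ s in a..b, ‖x s‖ := by
  rw [← intervalIntegral.integral_const_mul]
  exact norm_integral_le_of_norm_le hab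
    (ae_of_all _ fun s hs => (L s).le_of_opNorm_le (hL s hs) _) (hx.norm.const_mul C)

theorem eqOn_Ioc_of_hasDerivWithinAt_of_tendsto {g f g' : ℝ → F} {a b : ℝ} {y : F}
    (hg : ∀ t ∈ Ioc a b, HasDerivWithinAt g (g' t) (Ioc a b) t)
    (hf : ∀ t ∈ Ioc a b, HasDerivWithinAt f (g' t) (Ioc a b) t)
    (hg₀ : Tendsto g (𝓝[>] a) (𝓝 y)) (hf₀ : Tendsto f (𝓝[>] a) (𝓝 y)) :
    EqOn g f (Ioc a b) := by
  intro t ht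
  have hconst : ∀ u ∈ Ioc a b, (g - f) u = (g - f) t := fun u hu => by
    simpa [sub_eq_zero] using
      (convex_Ioc a b).norm_image_sub_le_of_norm_hasDerivWithin_le (C := 0)
        (fun v hv => (hg v hv).sub (hf v hv)) (fun _ _ => by simp) ht hu
  have hlim : Tendsto (g - f) (𝓝[>] a) (𝓝 ((g - f) t)) :=
    tendsto_const_nhds.congr' (mem_of_superset (Ioc_mem_nhdsGT ht.1) fun u hu =>
      (hconst u (Ioc_subset_Ioc_right ht.2 hu)).symm)
  exact sub_eq_zero.1 (tendsto_nhds_unique hlim (sub_self y ▸ hg₀.sub hf₀))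

noncomputable def splitVolterra (α : ℝ) (A B : ℝ → ℝ → E →L[ℝ] F) (x : ℝ → E) (t : ℝ) : F :=
  (∫ s in (0 : ℝ)..α * t, A t s (x s)) + ∫ s in α * t..t, B t s (x s)

theorem tendsto_splitVolterra_nhdsGT_zero {A B : ℝ → ℝ → E →L[ℝ] F} {x : ℝ → E} {α T : ℝ}
    (hT : 0 < T) (hα0 : 0 ≤ α) (hα1 : α ≤ 1)
    (hAc : Continuous fun p : ℝ × ℝ => A p.1 p.2) (hBc : Continuous fun p : ℝ × ℝ => B p.1 p.2)
    (hxint : IntegrableOn x (Ioc 0 T)) :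
    Tendsto (splitVolterra α A B x) (𝓝[>] 0) (𝓝 0) := by
  have hsq : IsCompact (Icc 0 T ×ˢ Icc 0 T) := isCompact_Icc.prod isCompact_Icc
  obtain ⟨CA, hCA⟩ := hsq.exists_bound_of_continuousOn hAc.continuousOn
  obtain ⟨CB, hCB⟩ := hsq.exists_bound_of_continuousOn hBc.continuousOn
  have hρ : Tendsto (fun ε => ∫ s in (0 : ℝ)..ε, ‖x s‖) (𝓝[>] 0) (𝓝 0) := by
    have := continuousWithinAt_primitive (a := 0) (b₁ := 0) (b₂ := T) (b₀ := 0)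
      Real.volume_singleton (f := fun s => ‖x s‖) ?_
    · simpa using this.tendsto.mono_left (nhdsWithin_le_of_mem (Icc_mem_nhdsGT hT))
    · simpa [hT.le] using (hxint.intervalIntegrable_of_mem_Icc (left_mem_Icc.2 hT.le)
        (right_mem_Icc.2 hT.le)).norm
  have hbound : ∀ ε ∈ Ioc 0 T,
      ‖splitVolterra α A B x ε‖ ≤ max CA CB * ∫ s in (0 : ℝ)..ε, ‖x s‖ := by
    intro ε hε
    have hαε : α * ε ∈ Icc 0 ε := ⟨mul_nonneg hα0 hε.1.le, mul_le_of_le_one_left hε.1.le hα1⟩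
    have hsq_mem : ∀ s ∈ Ioc 0 ε, (ε, s) ∈ Icc 0 T ×ˢ Icc 0 T := fun s hs =>
      ⟨Ioc_subset_Icc_self hε, hs.1.le, hs.2.trans hε.2⟩
    have hx : ∀ {u v}, u ∈ Icc 0 ε → v ∈ Icc 0 ε → IntervalIntegrable x volume u v :=
      fun hu hv => hxint.intervalIntegrable_of_mem_Icc (Icc_subset_Icc_right hε.2 hu)
        (Icc_subset_Icc_right hε.2 hv)
    have h0 : (0 : ℝ) ∈ Icc 0 ε := left_mem_Icc.2 hε.1.le
    have hε' : ε ∈ Icc 0 ε := right_mem_Icc.2 hε.1.le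
    calc ‖splitVolterra α A B x ε‖
        ≤ ‖∫ s in (0 : ℝ)..α * ε, A ε s (x s)‖ + ‖∫ s in α * ε..ε, B ε s (x s)‖ :=
          norm_add_le _ _
      _ ≤ max CA CB * (∫ s in (0 : ℝ)..α * ε, ‖x s‖) + max CA CB * ∫ s in α * ε..ε, ‖x s‖ := by
        gcongr
        · exact norm_intervalIntegral_clm_apply_le hαε.1 (fun s hs => (hCA _ (hsq_mem s
            (Ioc_subset_Ioc_right hαε.2 hs))).trans (le_max_left _ _)) (hx h0 hαε)
        · exact norm_intervalIntegral_clm_apply_le hαε.2 (fun s hs => (hCB _ (hsq_mem s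
            (Ioc_subset_Ioc_left hαε.1 hs))).trans (le_max_right _ _)) (hx hαε hε')
      _ = max CA CB * ∫ s in (0 : ℝ)..ε, ‖x s‖ := by
        rw [← mul_add, integral_add_adjacent_intervals (hx h0 hαε).norm (hx hαε hε').norm]
  refine squeeze_zero_norm' (mem_of_superset (Ioc_mem_nhdsGT hT) hbound) ?_
  simpa using hρ.const_mul (max CA CB)

theorem hasDerivAt_intervalIntegral_clm_apply {K K' : ℝ → ℝ → E →L[ℝ] F} {x : ℝ → E}
    {a b : ℝ} (hKc : Continuous fun p : ℝ × ℝ => K p.1 p.2)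
    (hK'c : Continuous fun p : ℝ × ℝ => K' p.1 p.2)
    (hKd : ∀ s t, HasDerivAt (fun τ => K τ s) (K' t s) t)
    (hx : IntervalIntegrable x volume a b) (t₀ : ℝ) :
    HasDerivAt (fun t => ∫ s in a..b, K t s (x s)) (∫ s in a..b, K' t₀ s (x s)) t₀ := by
  have hint : ∀ {L : ℝ → ℝ → E →L[ℝ] F}, (Continuous fun p : ℝ × ℝ => L p.1 p.2) → ∀ t,
      IntervalIntegrable (fun s => L t s (x s)) volume a b := fun hL t =>
    hx.continuous_clm_apply (hL.comp (continuous_const.prodMk continuous_id))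
  obtain ⟨C, hC⟩ := ((isCompact_closedBall t₀ 1).prod
    (isCompact_uIcc (a := a) (b := b))).exists_bound_of_continuousOn hK'c.continuousOn
  refine (hasDerivAt_integral_of_dominated_loc_of_deriv_le (F' := fun t s => K' t s (x s))
    (bound := fun s => C * ‖x s‖) (Metric.closedBall_mem_nhds t₀ one_pos)
    (Eventually.of_forall fun t => (hint hKc t).def'.aestronglyMeasurable) (hint hKc t₀)
    (hint hK'c t₀).def'.aestronglyMeasurable ?_ (hx.norm.const_mul C) ?_).2
  · exact ae_of_all _ fun s hs t ht =>
      (K' t s).le_of_opNorm_le (hC (t, s) ⟨ht, uIoc_subset_uIcc hs⟩) _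
  · exact ae_of_all _ fun s _ t _ => by
      simpa using (hKd s t).clm_apply (hasDerivAt_const t (x s))

variable [CompleteSpace F]

theorem hasDerivWithinAt_intervalIntegral_of_tendsto_uncurry
    {h : ℝ → ℝ → F} {φ : ℝ → ℝ} {φ' t₀ : ℝ} {S V : Set ℝ} {L : F}
    (hφ : HasDerivWithinAt φ φ' S t₀)
    (hint : ∀ᶠ t in 𝓝[S] t₀, IntervalIntegrable (h t) volume (φ t₀) (φ t))
    (hV : ∀ᶠ t in 𝓝[S] t₀, uIoc (φ t₀) (φ t) ⊆ V)
    (hL : Tendsto (fun p : ℝ × ℝ => h p.1 p.2) (𝓝[S] t₀ ×ˢ 𝓝[V] (φ t₀)) (𝓝 L)) :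
    HasDerivWithinAt (fun t => ∫ s in φ t₀..φ t, h t s) (φ' • L) S t₀ := by
  have hsmall :
      (fun t => ∫ s in φ t₀..φ t, (h t s - L)) =o[𝓝[S] t₀] (fun t => φ t - φ t₀) := by
    refine isLittleO_iff.2 fun ε hε => ?_
    obtain ⟨P, hP, Q, hQ, hPQ⟩ := mem_prod_iff.1 (hL (Metric.closedBall_mem_nhds L hε))
    obtain ⟨δ, hδ, hδQ⟩ := Metric.mem_nhdsWithin_iff.1 hQ
    filter_upwards [hP, hV, hφ.continuousWithinAt (Metric.ball_mem_nhds (φ t₀) hδ)]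
      with t htP htV htδ
    refine norm_integral_le_of_norm_le_const fun s hs => ?_
    have hsδ : s ∈ Metric.ball (φ t₀) δ :=
      (abs_sub_left_of_mem_uIcc (uIoc_subset_uIcc hs)).trans_lt htδ
    simpa [← dist_eq_norm] using hPQ (mk_mem_prod htP (hδQ ⟨hsδ, htV hs⟩))
  have hrem : HasDerivWithinAt (fun t => ∫ s in φ t₀..φ t, (h t s - L)) 0 S t₀ := by
    rw [hasDerivWithinAt_iff_isLittleO]
    simpa using hsmall.trans_isBigO hφ.hasFDerivWithinAt.isBigO_sub
  refine zero_add (φ' • L) ▸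
    (hrem.add ((hφ.sub_const (φ t₀)).smul_const L)).congr_of_eventuallyEq ?_ (by simp)
  filter_upwards [hint] with t ht
  rw [Pi.add_apply, integral_sub ht intervalIntegrable_const, intervalIntegral.integral_const,
    sub_add_cancel]

theorem hasDerivWithinAt_intervalIntegral_clm_apply_of_mapsTo
    {K K' : ℝ → ℝ → E →L[ℝ] F} {x : ℝ → E} {φ : ℝ → ℝ} {a b φ' t₀ : ℝ}
    (hKc : Continuous fun p : ℝ × ℝ => K p.1 p.2)
    (hK'c : Continuous fun p : ℝ × ℝ => K' p.1 p.2)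
    (hKd : ∀ s t, HasDerivAt (fun τ => K τ s) (K' t s) t)
    (hxc : ContinuousOn x (Ioc a b)) (hxint : IntegrableOn x (Ioc a b))
    (hφ : HasDerivWithinAt φ φ' (Ioc a b) t₀) (hφab : MapsTo φ (Ioc a b) (Ioc a b))
    (ht₀ : t₀ ∈ Ioc a b) :
    HasDerivWithinAt (fun t => ∫ s in a..φ t, K t s (x s))
      (φ' • K t₀ (φ t₀) (x (φ t₀)) + ∫ s in a..φ t₀, K' t₀ s (x s)) (Ioc a b) t₀ := by
  have ha : a ∈ Icc a b := left_mem_Icc.2 (ht₀.1.le.trans ht₀.2)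
  have hv₀ : φ t₀ ∈ Icc a b := Ioc_subset_Icc_self (hφab ht₀)
  have hφt : ∀ t ∈ Ioc a b, φ t ∈ Icc a b := fun t ht => Ioc_subset_Icc_self (hφab ht)
  -- `x` may be unbounded near `a`, so only the part with fixed endpoints is differentiated under
  -- the integral sign; the part near `φ t₀`, where `x` is continuous, is handled by continuity.
  have hfixed := (hasDerivAt_intervalIntegral_clm_apply hKc hK'c hKd
    (hxint.intervalIntegrable_of_mem_Icc ha hv₀) t₀).hasDerivWithinAt (s := Ioc a b)
  have hlim : Tendsto (fun p : ℝ × ℝ => K p.1 p.2 (x p.2))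
      (𝓝[Ioc a b] t₀ ×ˢ 𝓝[Ioc a b] (φ t₀)) (𝓝 (K t₀ (φ t₀) (x (φ t₀)))) := by
    have hcont : ContinuousWithinAt (fun p : ℝ × ℝ => K p.1 p.2 (x p.2))
        (univ ×ˢ Ioc a b) (t₀, φ t₀) :=
      hKc.continuousWithinAt.clm_apply (ContinuousWithinAt.comp (f := Prod.snd)
        (hxc _ (hφab ht₀)) continuousWithinAt_snd fun _ hp => hp.2)
    refine hcont.tendsto.mono_left ?_
    rw [nhdsWithin_prod_eq, nhdsWithin_univ]
    exact prod_mono_left _ nhdsWithin_le_nhds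
  have hmoving := hasDerivWithinAt_intervalIntegral_of_tendsto_uncurry
    (h := fun t s => K t s (x s)) hφ
    (eventually_nhdsWithin_of_forall fun t ht =>
      hxint.intervalIntegrable_clm_apply hKc t hv₀ (hφt t ht))
    (eventually_nhdsWithin_of_forall fun t ht =>
      uIoc_subset_uIcc.trans (ordConnected_Ioc.uIcc_subset (hφab ht₀) (hφab ht))) hlim
  refine add_comm (∫ s in a..φ t₀, K' t₀ s (x s)) _ ▸
    (hfixed.add hmoving).congr_of_mem (fun t ht => ?_) ht₀
  exact (integral_add_adjacent_intervals (hxint.intervalIntegrable_clm_apply hKc t ha hv₀)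
    (hxint.intervalIntegrable_clm_apply hKc t hv₀ (hφt t ht))).symm

theorem hasDerivWithinAt_splitVolterra {A B A' B' : ℝ → ℝ → E →L[ℝ] F} {x : ℝ → E}
    {α T t : ℝ} (hα0 : 0 < α) (hα1 : α ≤ 1)
    (hAc : Continuous fun p : ℝ × ℝ => A p.1 p.2) (hBc : Continuous fun p : ℝ × ℝ => B p.1 p.2)
    (hA'c : Continuous fun p : ℝ × ℝ => A' p.1 p.2)
    (hB'c : Continuous fun p : ℝ × ℝ => B' p.1 p.2)
    (hAd : ∀ s t, HasDerivAt (fun τ => A τ s) (A' t s) t)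
    (hBd : ∀ s t, HasDerivAt (fun τ => B τ s) (B' t s) t)
    (hxc : ContinuousOn x (Ioc 0 T)) (hxint : IntegrableOn x (Ioc 0 T)) (ht : t ∈ Ioc 0 T) :
    HasDerivWithinAt (splitVolterra α A B x)
      (B t t (x t) + α • ((A t (α * t) - B t (α * t)) (x (α * t))) +
        (∫ s in (0 : ℝ)..α * t, A' t s (x s)) + ∫ s in α * t..t, B' t s (x s)) (Ioc 0 T) t := by
  have hmaps : MapsTo (α * ·) (Ioc 0 T) (Ioc 0 T) := fun τ hτ =>
    ⟨mul_pos hα0 hτ.1, (mul_le_of_le_one_left hτ.1.le hα1).trans hτ.2⟩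
  have hlin : HasDerivWithinAt (α * ·) α (Ioc 0 T) t := by
    simpa using ((hasDerivAt_id t).const_mul α).hasDerivWithinAt
  have hA :=
    hasDerivWithinAt_intervalIntegral_clm_apply_of_mapsTo hAc hA'c hAd hxc hxint hlin hmaps ht
  have hB :=
    hasDerivWithinAt_intervalIntegral_clm_apply_of_mapsTo hBc hB'c hBd hxc hxint hlin hmaps ht
  have hB₁ := hasDerivWithinAt_intervalIntegral_clm_apply_of_mapsTo hBc hB'c hBd hxc hxint
    (hasDerivWithinAt_id t _) (mapsTo_id _) ht
  have hsplit : ∀ {K : ℝ → ℝ → E →L[ℝ] F}, (Continuous fun p : ℝ × ℝ => K p.1 p.2) →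
      ∀ τ ∈ Ioc 0 T, ∫ s in α * τ..τ, K τ s (x s) =
        (∫ s in (0 : ℝ)..τ, K τ s (x s)) - ∫ s in (0 : ℝ)..α * τ, K τ s (x s) := by
    intro K hKc τ hτ
    have h0 : (0 : ℝ) ∈ Icc 0 T := left_mem_Icc.2 (hτ.1.le.trans hτ.2)
    exact (integral_interval_sub_left (hxint.intervalIntegrable_clm_apply hKc τ h0
      (Ioc_subset_Icc_self hτ)) (hxint.intervalIntegrable_clm_apply hKc τ h0
      (Ioc_subset_Icc_self (hmaps hτ)))).symm
  refine ((hA.add (hB₁.sub hB)).congr_of_mem (fun τ hτ => ?_) ht).congr_deriv ?_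
  · simp only [splitVolterra, hsplit hBc τ hτ, Pi.add_apply, Pi.sub_apply, id]
  · simp only [hsplit hB'c t ht, id, one_smul, sub_apply, smul_sub]
    abel

end

/-- equivalence of the first-kind equation and the differentiated
integral–functional equation (case n = 2, α₁(t) = α t). -/
theorem first_kind_iff_differentiated (m : ℕ) (T : ℝ) (hT : 0 < T)
    (α : ℝ) (hα0 : 0 < α) (hα1 : α < 1)
    (A B A' B' : ℝ → ℝ → (EuclideanSpace ℝ (Fin m) →L[ℝ] EuclideanSpace ℝ (Fin m)))
    (hAc : Continuous fun p : ℝ × ℝ => A p.1 p.2)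
    (hBc : Continuous fun p : ℝ × ℝ => B p.1 p.2)
    (hA'c : Continuous fun p : ℝ × ℝ => A' p.1 p.2)
    (hB'c : Continuous fun p : ℝ × ℝ => B' p.1 p.2)
    (hAd : ∀ s t : ℝ, HasDerivAt (fun τ => A τ s) (A' t s) t)
    (hBd : ∀ s t : ℝ, HasDerivAt (fun τ => B τ s) (B' t s) t)
    (f f' : ℝ → EuclideanSpace ℝ (Fin m))
    (hfd : ∀ t : ℝ, HasDerivAt f (f' t) t) (hf0 : f 0 = 0)
    (x : ℝ → EuclideanSpace ℝ (Fin m))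
    (hxc : ContinuousOn x (Set.Ioc 0 T))
    (hxint : MeasureTheory.IntegrableOn x (Set.Ioc 0 T)) :
    (∀ t ∈ Set.Ioc (0 : ℝ) T,
        (∫ s in (0 : ℝ)..(α * t), A t s (x s)) +
          (∫ s in (α * t)..t, B t s (x s)) = f t) ↔
      (∀ t ∈ Set.Ioc (0 : ℝ) T,
        B t t (x t) + α • ((A t (α * t) - B t (α * t)) (x (α * t))) +
          (∫ s in (0 : ℝ)..(α * t), A' t s (x s)) +
          (∫ s in (α * t)..t, B' t s (x s)) = f' t) := by
  have hg : ∀ t ∈ Ioc 0 T, HasDerivWithinAt (splitVolterra α A B x)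
      (B t t (x t) + α • ((A t (α * t) - B t (α * t)) (x (α * t))) +
        (∫ s in (0 : ℝ)..α * t, A' t s (x s)) + ∫ s in α * t..t, B' t s (x s)) (Ioc 0 T) t :=
    fun t ht => hasDerivWithinAt_splitVolterra hα0 hα1.le hAc hBc hA'c hB'c hAd hBd hxc hxint ht
  constructor
  · intro H t ht
    exact (uniqueDiffOn_Ioc 0 T t ht).eq_deriv _
      ((hg t ht).congr_of_mem (fun τ hτ => (H τ hτ).symm) ht) (hfd t).hasDerivWithinAt
  · intro H t ht
    refine eqOn_Ioc_of_hasDerivWithinAt_of_tendsto hg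
      (fun τ hτ => (hfd τ).hasDerivWithinAt.congr_deriv (H τ hτ).symm)
      (tendsto_splitVolterra_nhdsGT_zero hT hα0.le hα1.le hAc hBc hxint) ?_ ht
    simpa [hf0] using (hfd 0).continuousAt.tendsto.mono_left nhdsWithin_le_nhds
end

section
/- Let K be a real symmetric m×m matrix with eigenvalue 1, and d ∈ ℝ^m with ⟨d, φ⟩ ≠ 0 for some unit eigenvector φ of K for eigenvalue 1. Then there is no bounded continuous function x : (0,1] → ℝ^m solving ∫₀^{t/2} K x(s) ds + ∫_{t/2}^{t} (K − 2E) x(s) ds = d t for all t ∈ (0,1]; however, unbounded continuous solutions (growing like ln t as t → 0⁺) exist. -/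
/-!
Pairing the equation with the eigenvector `φ` (which is also a left eigenvector, `K` being
symmetric) gives, for `G t = ⟪∫₀ᵗ x, φ⟫`, the relation `2 G(t/2) - G t = ⟪d, φ⟫ t`. If `x` is
bounded then `|G t| ≤ C t`, so `2ⁿ G(2⁻ⁿ)` is a bounded arithmetic progression with step
`⟪d, φ⟫`, which forces `⟪d, φ⟫ = 0`.

Conversely, `K - 1` is symmetric, so `d = (K - 1) v + p` with `K p = p`, and
`x s = v - log₂ s • p` is a solution: on multiples of `p` the equation reduces to
`∫₀^{t/2} log₂ - ∫_{t/2}^t log₂ = -t`.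
-/

open Matrix Real MeasureTheory

theorem LinearMap.IsSymmetric.range_sup_ker {𝕜 E : Type*} [RCLike 𝕜] [NormedAddCommGroup E]
    [InnerProductSpace 𝕜 E] [FiniteDimensional 𝕜 E] {T : E →ₗ[𝕜] E} (hT : T.IsSymmetric) :
    LinearMap.range T ⊔ LinearMap.ker T = ⊤ := by
  rw [← hT.orthogonal_range]
  exact Submodule.sup_orthogonal_of_hasOrthogonalProjection

theorem Matrix.IsHermitian.exists_eq_mulVec_add {𝕜 n : Type*} [RCLike 𝕜] [Fintype n]
    [DecidableEq n] {A : Matrix n n 𝕜} (hA : A.IsHermitian) (d : n → 𝕜) :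
    ∃ v p, A *ᵥ p = 0 ∧ d = A *ᵥ v + p := by
  have hd : WithLp.toLp 2 d ∈
      LinearMap.range A.toEuclideanLin ⊔ LinearMap.ker A.toEuclideanLin := by
    rw [(isSymmetric_toEuclideanLin_iff.mpr hA).range_sup_ker]; trivial
  obtain ⟨_, ⟨v, rfl⟩, p, hp, hdp⟩ := Submodule.mem_sup.mp hd
  refine ⟨WithLp.ofLp v, WithLp.ofLp p, ?_, ?_⟩
  · simpa using congrArg WithLp.ofLp hp
  · simpa using (congrArg WithLp.ofLp hdp).symm

theorem Matrix.IsSymm.mulVec_dotProduct {n : Type*} [Fintype n] {K : Matrix n n ℝ}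
    (hK : K.IsSymm) (v w : n → ℝ) : (K *ᵥ v) ⬝ᵥ w = v ⬝ᵥ (K *ᵥ w) := by
  rw [dotProduct_comm, dotProduct_mulVec, ← mulVec_transpose, hK.eq, dotProduct_comm]

theorem abs_dotProduct_le {n : Type*} [Fintype n] (v w : n → ℝ) :
    |v ⬝ᵥ w| ≤ ‖v‖ * ∑ i, |w i| := by
  rw [Finset.mul_sum]
  refine (Finset.abs_sum_le_sum_abs _ _).trans (Finset.sum_le_sum fun i _ => ?_)
  rw [abs_mul]
  exact mul_le_mul_of_nonneg_right (norm_le_pi_norm v i) (abs_nonneg _)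

theorem integrableOn_Ioc_of_continuousOn_of_norm_le {E : Type*} [NormedAddCommGroup E]
    {f : ℝ → E} {a b C : ℝ} (hf : ContinuousOn f (Set.Ioc a b))
    (hC : ∀ t ∈ Set.Ioc a b, ‖f t‖ ≤ C) : IntegrableOn f (Set.Ioc a b) :=
  ⟨hf.aestronglyMeasurable measurableSet_Ioc, .restrict_of_bounded (C := C) measure_Ioc_lt_top
    ((ae_restrict_iff' measurableSet_Ioc).mpr (.of_forall hC))⟩

theorem Matrix.intervalIntegral_mulVec {m n : Type*} [Fintype m] [Fintype n] (A : Matrix m n ℝ)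
    {f : ℝ → n → ℝ} {a b : ℝ} (hf : IntervalIntegrable f volume a b) :
    ∫ s in a..b, A *ᵥ f s = A *ᵥ ∫ s in a..b, f s :=
  (LinearMap.toContinuousLinearMap (mulVecLin A)).intervalIntegral_comp_comm hf

theorem integral_logb_two_half_sub (t : ℝ) :
    (∫ s in 0..t / 2, logb 2 s) - ∫ s in t / 2..t, logb 2 s = -t := by
  rcases eq_or_ne t 0 with rfl | ht
  · simp
  simp only [logb, intervalIntegral.integral_div, integral_log, log_div ht two_ne_zero]
  field_simp
  ring

theorem eq_zero_of_add_const_of_abs_le {a : ℕ → ℝ} {α C : ℝ} (ha : ∀ n, a (n + 1) = a n + α)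
    (hC : ∀ n, |a n| ≤ C) : α = 0 := by
  have closed_form : ∀ n : ℕ, a n = a 0 + n * α := by
    intro n
    induction n with
    | zero => simp
    | succ k ih => rw [ha, ih]; push_cast; ring
  by_contra hα
  obtain ⟨n, hn⟩ := exists_nat_gt ((C + |a 0|) / |α|)
  rw [div_lt_iff₀ (abs_pos.mpr hα)] at hn
  have h_step : (n : ℝ) * |α| ≤ |a n| + |a 0| := by
    simpa [closed_form n, abs_mul] using abs_sub (a 0 + n * α) (a 0)
  linarith [hC n]

theorem eq_zero_of_two_mul_half_sub_eq_mul {G : ℝ → ℝ} {α C : ℝ}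
    (hG : ∀ t ∈ Set.Ioc (0 : ℝ) 1, 2 * G (t / 2) - G t = α * t)
    (hC : ∀ t ∈ Set.Ioc (0 : ℝ) 1, |G t| ≤ C * t) : α = 0 := by
  have mem : ∀ n : ℕ, (2 : ℝ)⁻¹ ^ n ∈ Set.Ioc (0 : ℝ) 1 :=
    fun n => ⟨by positivity, pow_le_one₀ (by norm_num) (by norm_num)⟩
  have cancel : ∀ n : ℕ, (2 : ℝ) ^ n * 2⁻¹ ^ n = 1 := fun n => by simp
  refine eq_zero_of_add_const_of_abs_le (a := fun n => 2 ^ n * G (2⁻¹ ^ n)) (C := C)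
    (fun n => ?_) (fun n => ?_)
  · have h := hG _ (mem n)
    rw [show (2 : ℝ)⁻¹ ^ n / 2 = 2⁻¹ ^ (n + 1) by ring] at h
    linear_combination (2 : ℝ) ^ n * h + α * cancel n
  · calc |2 ^ n * G (2⁻¹ ^ n)| = 2 ^ n * |G (2⁻¹ ^ n)| := by simp [abs_mul]
      _ ≤ 2 ^ n * (C * 2⁻¹ ^ n) := by gcongr; exact hC _ (mem n)
      _ = C := by linear_combination C * cancel n

noncomputable def splitIntegral {n : Type*} [Fintype n] [DecidableEq n] (K : Matrix n n ℝ)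
    (x : ℝ → n → ℝ) (t : ℝ) : n → ℝ :=
  (∫ s in (0 : ℝ)..(t / 2), K *ᵥ x s) + ∫ s in (t / 2)..t, (K - 2 • (1 : Matrix n n ℝ)) *ᵥ x s

section splitIntegral

variable {n : Type*} [Fintype n] [DecidableEq n] {K : Matrix n n ℝ}

theorem sub_nsmul_one_mulVec (k : ℕ) (w : n → ℝ) : (K - k • 1) *ᵥ w = K *ᵥ w - k • w := by
  rw [sub_mulVec, smul_mulVec, one_mulVec]

theorem splitIntegral_dotProduct_of_mulVec_eq_self (hK : K.IsSymm) {φ : n → ℝ} (hφ : K *ᵥ φ = φ)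
    {x : ℝ → n → ℝ} {t : ℝ} (hx : IntervalIntegrable x volume 0 t) :
    splitIntegral K x t ⬝ᵥ φ = 2 * ((∫ s in 0..t / 2, x s) ⬝ᵥ φ) - (∫ s in 0..t, x s) ⬝ᵥ φ := by
  have half_mem : t / 2 ∈ Set.uIcc 0 t := by
    rcases le_total 0 t with h | h
    · exact Set.mem_uIcc.mpr (.inl ⟨by linarith, by linarith⟩)
    · exact Set.mem_uIcc.mpr (.inr ⟨by linarith, by linarith⟩)
  have hx_half : IntervalIntegrable x volume 0 (t / 2) :=
    hx.mono_set (Set.uIcc_subset_uIcc Set.left_mem_uIcc half_mem)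
  have hx_rest : IntervalIntegrable x volume (t / 2) t :=
    hx.mono_set (Set.uIcc_subset_uIcc half_mem Set.right_mem_uIcc)
  rw [splitIntegral, intervalIntegral_mulVec _ hx_half, intervalIntegral_mulVec _ hx_rest,
    ← intervalIntegral.integral_interval_sub_left hx hx_half, sub_nsmul_one_mulVec]
  simp only [add_dotProduct, sub_dotProduct, smul_dotProduct, hK.mulVec_dotProduct, hφ]
  ring

theorem splitIntegral_sub_logb_smul {p : n → ℝ} (hp : K *ᵥ p = p) (v : n → ℝ) (t : ℝ) :
    splitIntegral K (fun s => v - logb 2 s • p) t = t • ((K - 1) *ᵥ v + p) := by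
  have hlog : ∀ a b : ℝ, IntervalIntegrable (fun s => logb 2 s • p) volume a b :=
    fun a b => (intervalIntegral.intervalIntegrable_log'.div_const _).smul_continuousOn
      continuousOn_const
  have hK_eq : ∀ s, K *ᵥ (v - logb 2 s • p) = K *ᵥ v - logb 2 s • p := fun s => by
    rw [mulVec_sub, mulVec_smul, hp]
  have hK2_eq : ∀ s, (K - 2 • 1) *ᵥ (v - logb 2 s • p) = (K - 2 • 1) *ᵥ v + logb 2 s • p :=
    fun s => by rw [mulVec_sub, mulVec_smul, sub_nsmul_one_mulVec 2 p, hp]; module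
  simp only [splitIntegral, hK_eq, hK2_eq]
  rw [intervalIntegral.integral_sub intervalIntegrable_const (hlog _ _),
    intervalIntegral.integral_add intervalIntegrable_const (hlog _ _),
    intervalIntegral.integral_const, intervalIntegral.integral_const,
    intervalIntegral.integral_smul_const, intervalIntegral.integral_smul_const,
    sub_nsmul_one_mulVec, sub_mulVec, one_mulVec]
  linear_combination (norm := module) -((integral_logb_two_half_sub t) • p)

theorem dotProduct_eq_zero_of_bounded_solution (hK : K.IsSymm) {φ : n → ℝ} (hφ : K *ᵥ φ = φ)
    {d : n → ℝ} {x : ℝ → n → ℝ} {C : ℝ} (hx_cont : ContinuousOn x (Set.Ioc 0 1))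
    (hC : ∀ t ∈ Set.Ioc (0 : ℝ) 1, ‖x t‖ ≤ C)
    (hx_sol : ∀ t ∈ Set.Ioc (0 : ℝ) 1, splitIntegral K x t = t • d) : d ⬝ᵥ φ = 0 := by
  have hx_int : ∀ t ∈ Set.Ioc (0 : ℝ) 1, IntervalIntegrable x volume 0 t := fun t ht =>
    (intervalIntegrable_iff_integrableOn_Ioc_of_le ht.1.le).mpr
      ((integrableOn_Ioc_of_continuousOn_of_norm_le hx_cont hC).mono_set
        (Set.Ioc_subset_Ioc_right ht.2))
  refine eq_zero_of_two_mul_half_sub_eq_mul (G := fun t => (∫ s in 0..t, x s) ⬝ᵥ φ)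
    (C := C * ∑ i, |φ i|) (fun t ht => ?_) (fun t ht => ?_)
  · rw [← splitIntegral_dotProduct_of_mulVec_eq_self hK hφ (hx_int t ht), hx_sol t ht,
      smul_dotProduct, smul_eq_mul, mul_comm]
  · have h_norm : ‖∫ s in 0..t, x s‖ ≤ C * t := by
      have := intervalIntegral.norm_integral_le_of_norm_le_const fun s hs =>
        hC s (Set.Ioc_subset_Ioc_right ht.2 (by rwa [Set.uIoc_of_le ht.1.le] at hs))
      rwa [sub_zero, abs_of_pos ht.1] at this
    calc _ ≤ ‖∫ s in 0..t, x s‖ * ∑ i, |φ i| := abs_dotProduct_le _ _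
      _ ≤ C * t * ∑ i, |φ i| := by gcongr
      _ = (C * ∑ i, |φ i|) * t := by ring

theorem exists_continuousOn_splitIntegral_eq_smul (hK : K.IsSymm) (d : n → ℝ) :
    ∃ x : ℝ → n → ℝ, ContinuousOn x (Set.Ioi 0) ∧ ∀ t, splitIntegral K x t = t • d := by
  obtain ⟨v, p, hp, hdp⟩ :=
    (isHermitian_iff_isSymm.mpr (hK.sub isSymm_one)).exists_eq_mulVec_add d
  rw [sub_mulVec, one_mulVec, sub_eq_zero] at hp
  refine ⟨fun s => v - logb 2 s • p, ?_, fun t => ?_⟩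
  · exact continuousOn_const.sub
      ((continuousOn_logb.mono fun s (hs : s ∈ Set.Ioi 0) => hs.ne').smul continuousOn_const)
  · rw [splitIntegral_sub_logb_smul hp v t, ← hdp]

end splitIntegral

theorem no_bounded_solution_but_unbounded_exists_general (m : ℕ)
    (K : Matrix (Fin m) (Fin m) ℝ) (hK : K.IsSymm)
    (φ : Fin m → ℝ) (heig : K.mulVec φ = φ)
    (d : Fin m → ℝ) (hd : d ⬝ᵥ φ ≠ 0) :
    (¬ ∃ x : ℝ → Fin m → ℝ,
        ContinuousOn x (Set.Ioc 0 1) ∧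
        (∃ Cb : ℝ, ∀ t ∈ Set.Ioc (0 : ℝ) 1, ‖x t‖ ≤ Cb) ∧
        ∀ t ∈ Set.Ioc (0 : ℝ) 1,
          (∫ s in (0 : ℝ)..(t / 2), K.mulVec (x s)) +
            (∫ s in (t / 2)..t,
              (K - 2 • (1 : Matrix (Fin m) (Fin m) ℝ)).mulVec (x s)) = t • d) ∧
    (∃ x : ℝ → Fin m → ℝ,
        ContinuousOn x (Set.Ioc 0 1) ∧
        ∀ t ∈ Set.Ioc (0 : ℝ) 1,
          (∫ s in (0 : ℝ)..(t / 2), K.mulVec (x s)) +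
            (∫ s in (t / 2)..t,
              (K - 2 • (1 : Matrix (Fin m) (Fin m) ℝ)).mulVec (x s)) = t • d) := by
  refine ⟨fun ⟨x, hx_cont, ⟨C, hC⟩, hx_sol⟩ =>
    hd (dotProduct_eq_zero_of_bounded_solution hK heig hx_cont hC hx_sol), ?_⟩
  obtain ⟨x, hx_cont, hx_sol⟩ := exists_continuousOn_splitIntegral_eq_smul hK d
  exact ⟨x, hx_cont.mono fun t ht => ht.1, fun t _ => hx_sol t⟩

/-- no bounded continuous solution exists, but unbounded
continuous solutions do. -/
theorem no_bounded_solution_but_unbounded_exists (m : ℕ)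
    (K : Matrix (Fin m) (Fin m) ℝ) (hK : K.IsSymm)
    (φ : Fin m → ℝ) (hφunit : φ ⬝ᵥ φ = 1) (heig : K.mulVec φ = φ)
    (d : Fin m → ℝ) (hd : d ⬝ᵥ φ ≠ 0) :
    (¬ ∃ x : ℝ → Fin m → ℝ,
        ContinuousOn x (Set.Ioc 0 1) ∧
        (∃ Cb : ℝ, ∀ t ∈ Set.Ioc (0 : ℝ) 1, ‖x t‖ ≤ Cb) ∧
        ∀ t ∈ Set.Ioc (0 : ℝ) 1,
          (∫ s in (0 : ℝ)..(t / 2), K.mulVec (x s)) +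
            (∫ s in (t / 2)..t,
              (K - 2 • (1 : Matrix (Fin m) (Fin m) ℝ)).mulVec (x s)) = t • d) ∧
    (∃ x : ℝ → Fin m → ℝ,
        ContinuousOn x (Set.Ioc 0 1) ∧
        ∀ t ∈ Set.Ioc (0 : ℝ) 1,
          (∫ s in (0 : ℝ)..(t / 2), K.mulVec (x s)) +
            (∫ s in (t / 2)..t,
              (K - 2 • (1 : Matrix (Fin m) (Fin m) ℝ)).mulVec (x s)) = t • d) :=
  no_bounded_solution_but_unbounded_exists_general m K hK φ heig d hd
end
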